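/- Let K be a field, A an invertible d × d matrix, and B any d × d matrix over K. For the s × s Higman linearization L of T^s − T, rank(L(A, B)) = (s−1)d + rank(C^s − C), where C = A^{-1}B. -/

import Mathlib

/-
Since `L(t₀, t₁) = t₀ N + t₁ D` for two scalar `s × s` matrices `N`, `D`, we have
`L(A, B) = N ⊗ A + D ⊗ B = (I ⊗ A) · L(I, C)`, so only `A = I` matters. A block vector
`(x₀, …, x_{s-1})` lies in the kernel of `L(I, C)` iff its first `s - 1` block rows give
`x₁ = -C x₀` and `x_{i+1} = C xᵢ`, i.e. `xᵢ = -Cⁱ x₀` for `i ≥ 1`, and the last block row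
`-C x_{s-1} - C x₀ = 0` then reads `(Cˢ - C) x₀ = 0`. So `x ↦ x₀` identifies the kernel
of `L(I, C)` with that of `Cˢ - C`, and rank–nullity gives the formula.
-/


/-- The `sd × sd` matrix `L(t₀, t₁)` with `t₀ := B₀` and `t₁ := B₁` (`d × d` blocks):
diagonal blocks `B₁, -B₁, …, -B₁`, superdiagonal blocks `B₀`, block `-B₁` in position `(s,1)`. -/
def Lsub {K : Type*} [Field K] (s d : ℕ) (B₀ B₁ : Matrix (Fin d) (Fin d) K) :
    Matrix (Fin s × Fin d) (Fin s × Fin d) K :=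
  Matrix.of fun p q =>
    (if p.1 = q.1 then (if (p.1 : ℕ) = 0 then B₁ p.2 q.2 else -B₁ p.2 q.2) else 0)
    + (if (q.1 : ℕ) = (p.1 : ℕ) + 1 then B₀ p.2 q.2 else 0)
    + (if (p.1 : ℕ) = s - 1 ∧ (q.1 : ℕ) = 0 ∧ p.1 ≠ q.1 then -B₁ p.2 q.2 else 0)

open Matrix
open scoped Kronecker
open Function (curry)

section

variable {K : Type*} [Field K]

def Lcoeff₀ (s : ℕ) : Matrix (Fin s) (Fin s) K :=
  of fun i j => if (j : ℕ) = i + 1 then 1 else 0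

def Lcoeff₁ (s : ℕ) : Matrix (Fin s) (Fin s) K :=
  of fun i j => (if i = j then (if (i : ℕ) = 0 then 1 else -1) else 0)
    + (if (i : ℕ) = s - 1 ∧ (j : ℕ) = 0 ∧ i ≠ j then -1 else 0)

theorem Lsub_eq_kronecker (s d : ℕ) (B₀ B₁ : Matrix (Fin d) (Fin d) K) :
    Lsub s d B₀ B₁ = Lcoeff₀ s ⊗ₖ B₀ + Lcoeff₁ s ⊗ₖ B₁ := by
  ext ⟨i, a⟩ ⟨j, b⟩
  simp only [Lsub, Lcoeff₀, Lcoeff₁, of_apply, Matrix.add_apply, kronecker_apply]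
  split_ifs <;> ring

theorem Lsub_eq_one_kronecker_mul {s d : ℕ} {A B C : Matrix (Fin d) (Fin d) K} (h : A * C = B) :
    Lsub s d A B = (1 ⊗ₖ A) * Lsub s d 1 C := by
  rw [Lsub_eq_kronecker, Lsub_eq_kronecker, Matrix.mul_add, ← mul_kronecker_mul,
    ← mul_kronecker_mul, Matrix.one_mul, Matrix.one_mul, Matrix.mul_one, h]

theorem rank_Lsub_eq_rank_Lsub_one {s d : ℕ} {A : Matrix (Fin d) (Fin d) K} (hA : IsUnit A)
    (B : Matrix (Fin d) (Fin d) K) : (Lsub s d A B).rank = (Lsub s d 1 (A⁻¹ * B)).rank := by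
  have hdetA : IsUnit A.det := (isUnit_iff_isUnit_det A).mp hA
  have hdet : IsUnit (1 ⊗ₖ A : Matrix (Fin s × Fin d) (Fin s × Fin d) K).det := by
    rw [det_kronecker, det_one, one_pow, one_mul]
    exact hdetA.pow _
  rw [Lsub_eq_one_kronecker_mul (mul_nonsing_inv_cancel_left A B hdetA),
    rank_mul_eq_right_of_isUnit_det _ _ hdet]

theorem sum_Lcoeff₀_castSucc_smul {M : Type*} [AddCommMonoid M] [Module K M] {m : ℕ}
    (j : Fin (m + 1)) (v : Fin (m + 2) → M) :
    ∑ k, (Lcoeff₀ (m + 2) : Matrix _ _ K) j.castSucc k • v k = v j.succ := by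
  rw [Finset.sum_eq_single j.succ]
  · simp [Lcoeff₀]
  · intro k _ hk
    rw [Lcoeff₀, of_apply, if_neg, zero_smul]
    exact fun h => hk (Fin.ext h)
  · simp

theorem sum_Lcoeff₀_last_smul {M : Type*} [AddCommMonoid M] [Module K M] {m : ℕ}
    (v : Fin (m + 2) → M) :
    ∑ k, (Lcoeff₀ (m + 2) : Matrix _ _ K) (Fin.last (m + 1)) k • v k = 0 := by
  refine Finset.sum_eq_zero fun k _ => ?_
  rw [Lcoeff₀, of_apply, if_neg, zero_smul]
  simp only [Fin.val_last]
  omega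

theorem sum_Lcoeff₁_castSucc_smul {M : Type*} [AddCommGroup M] [Module K M] {m : ℕ}
    (j : Fin (m + 1)) (v : Fin (m + 2) → M) :
    ∑ k, (Lcoeff₁ (m + 2) : Matrix _ _ K) j.castSucc k • v k =
      if j = 0 then v 0 else -v j.castSucc := by
  have hj : ¬ ((j : ℕ) = m + 2 - 1) := by omega
  rw [Finset.sum_eq_single j.castSucc]
  · simp only [Lcoeff₁, of_apply, if_true, Fin.val_castSucc, hj, false_and, if_false, add_zero]
    rcases eq_or_ne j 0 with rfl | hj₀
    · simp
    · simp [hj₀, Fin.val_ne_zero_iff.mpr hj₀]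
  · intro k _ hk
    simp only [Lcoeff₁, of_apply, Fin.val_castSucc, hj, false_and, if_false, add_zero, Ne.symm hk]
    simp
  · simp

theorem sum_Lcoeff₁_last_smul {M : Type*} [AddCommGroup M] [Module K M] {m : ℕ}
    (v : Fin (m + 2) → M) :
    ∑ k, (Lcoeff₁ (m + 2) : Matrix _ _ K) (Fin.last (m + 1)) k • v k =
      -v (Fin.last (m + 1)) - v 0 := by
  have hne : Fin.last (m + 1) ≠ 0 := Fin.last_pos.ne'
  rw [Fintype.sum_eq_add (Fin.last (m + 1)) 0 hne]
  · simp only [Lcoeff₁, of_apply, if_true, hne, Fin.val_last, Fin.val_zero]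
    simp [sub_eq_add_neg]
  · intro k hk
    simp only [Lcoeff₁, of_apply, Ne.symm hk.1, if_false, Fin.val_last, zero_add]
    rw [if_neg, zero_smul]
    exact fun h => hk.2 (Fin.ext h.2.1)

theorem kronecker_mulVec_apply {m n p q : Type*} [Fintype n] [Fintype q] (X : Matrix m n K)
    (Y : Matrix p q K) (x : n × q → K) (i : m) (a : p) :
    (X ⊗ₖ Y *ᵥ x) (i, a) = (∑ j, X i j • (Y *ᵥ curry x j)) a := by
  simp only [mulVec, dotProduct, kronecker_apply, Fintype.sum_prod_type, Function.curry_apply,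
    Finset.sum_apply, Pi.smul_apply, smul_eq_mul, Finset.mul_sum, mul_assoc]

theorem curry_Lsub_mulVec_castSucc {m d : ℕ} (B₀ B₁ : Matrix (Fin d) (Fin d) K)
    (x : Fin (m + 2) × Fin d → K) (j : Fin (m + 1)) :
    curry (Lsub (m + 2) d B₀ B₁ *ᵥ x) j.castSucc =
      B₀ *ᵥ curry x j.succ
        + if j = 0 then B₁ *ᵥ curry x 0 else -(B₁ *ᵥ curry x j.castSucc) := by
  ext a
  rw [Function.curry_apply, Lsub_eq_kronecker, add_mulVec, Pi.add_apply, kronecker_mulVec_apply,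
    kronecker_mulVec_apply, sum_Lcoeff₀_castSucc_smul, sum_Lcoeff₁_castSucc_smul,
    Pi.add_apply]

theorem curry_Lsub_mulVec_last {m d : ℕ} (B₀ B₁ : Matrix (Fin d) (Fin d) K)
    (x : Fin (m + 2) × Fin d → K) :
    curry (Lsub (m + 2) d B₀ B₁ *ᵥ x) (Fin.last (m + 1)) =
      -(B₁ *ᵥ curry x (Fin.last (m + 1))) - B₁ *ᵥ curry x 0 := by
  ext a
  rw [Function.curry_apply, Lsub_eq_kronecker, add_mulVec, Pi.add_apply, kronecker_mulVec_apply,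
    kronecker_mulVec_apply, sum_Lcoeff₀_last_smul, sum_Lcoeff₁_last_smul, Pi.zero_apply,
    zero_add]

def higmanLift (s : ℕ) {d : ℕ} (C : Matrix (Fin d) (Fin d) K) :
    (Fin d → K) →ₗ[K] (Fin s × Fin d → K) where
  toFun y p := if (p.1 : ℕ) = 0 then y p.2 else -(C ^ (p.1 : ℕ) *ᵥ y) p.2
  map_add' y z := by
    ext p
    simp only [mulVec_add, Pi.add_apply, neg_add]
    split_ifs <;> rfl
  map_smul' c y := by
    ext p
    simp only [mulVec_smul, Pi.smul_apply, smul_eq_mul, RingHom.id_apply]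
    split_ifs <;> ring

theorem curry_higmanLift {s d : ℕ} (C : Matrix (Fin d) (Fin d) K) (y : Fin d → K) (i : Fin s) :
    curry (higmanLift s C y) i = if (i : ℕ) = 0 then y else -(C ^ (i : ℕ) *ᵥ y) := by
  ext a
  simp only [Function.curry_apply, higmanLift, LinearMap.coe_mk, AddHom.coe_mk]
  split_ifs <;> rfl

theorem higmanLift_injective (s : ℕ) {d : ℕ} [NeZero s] (C : Matrix (Fin d) (Fin d) K) :
    Function.Injective (higmanLift s C) := by
  intro y z h
  simpa [curry_higmanLift] using congrArg (fun x => curry x 0) h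

theorem Lsub_one_mulVec_eq_zero_iff {m d : ℕ} (C : Matrix (Fin d) (Fin d) K)
    (x : Fin (m + 2) × Fin d → K) :
    Lsub (m + 2) d 1 C *ᵥ x = 0 ↔
      ∃ y, (C ^ (m + 2) - C) *ᵥ y = 0 ∧ higmanLift (m + 2) C y = x := by
  constructor
  · intro hx
    have hrow : ∀ i, curry (Lsub (m + 2) d 1 C *ᵥ x) i = 0 := fun i => by
      rw [hx]; rfl
    set y := curry x 0
    have hblock : ∀ i, curry x i = curry (higmanLift (m + 2) C y) i := by
      refine Fin.induction (by simp [curry_higmanLift, y]) fun j ih => ?_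
      have h := hrow j.castSucc
      rw [curry_Lsub_mulVec_castSucc, one_mulVec] at h
      rw [eq_neg_of_add_eq_zero_left h, curry_higmanLift, Fin.val_succ, if_neg (Nat.succ_ne_zero _)]
      rcases eq_or_ne j 0 with rfl | hj
      · simp [y]
      · rw [if_neg hj, neg_neg, ih, curry_higmanLift, Fin.val_castSucc,
          if_neg (Fin.val_ne_zero_iff.mpr hj), mulVec_neg, mulVec_mulVec, ← pow_succ']
    refine ⟨y, ?_, funext fun p => (congrFun (hblock p.1) p.2).symm⟩
    have h := hrow (Fin.last (m + 1))
    rwa [curry_Lsub_mulVec_last, hblock, curry_higmanLift, Fin.val_last,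
      if_neg (Nat.succ_ne_zero _), mulVec_neg, mulVec_mulVec, ← pow_succ', neg_neg,
      ← sub_mulVec] at h
  · rintro ⟨y, hy, rfl⟩
    suffices ∀ i, curry (Lsub (m + 2) d 1 C *ᵥ higmanLift (m + 2) C y) i = 0 from
      funext fun p => congrFun (this p.1) p.2
    refine Fin.lastCases ?_ fun j => ?_
    · rw [curry_Lsub_mulVec_last, curry_higmanLift, curry_higmanLift, Fin.val_last,
        if_neg (Nat.succ_ne_zero _), Fin.val_zero, if_pos rfl, mulVec_neg, mulVec_mulVec,
        ← pow_succ', neg_neg, ← sub_mulVec, hy]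
    · rw [curry_Lsub_mulVec_castSucc, one_mulVec, curry_higmanLift, Fin.val_succ,
        if_neg (Nat.succ_ne_zero _)]
      rcases eq_or_ne j 0 with rfl | hj
      · simp [curry_higmanLift]
      · rw [if_neg hj, curry_higmanLift, Fin.val_castSucc, if_neg (Fin.val_ne_zero_iff.mpr hj),
          mulVec_neg, neg_neg, mulVec_mulVec, ← pow_succ', neg_add_cancel]

theorem ker_mulVecLin_Lsub_one {m d : ℕ} (C : Matrix (Fin d) (Fin d) K) :
    LinearMap.ker (Lsub (m + 2) d 1 C).mulVecLin =
      (LinearMap.ker (C ^ (m + 2) - C).mulVecLin).map (higmanLift (m + 2) C) := by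
  ext x
  simpa only [LinearMap.mem_ker, Submodule.mem_map, mulVecLin_apply] using
    Lsub_one_mulVec_eq_zero_iff C x

theorem rank_Lsub_one {m d : ℕ} (C : Matrix (Fin d) (Fin d) K) :
    (Lsub (m + 2) d 1 C).rank = (m + 1) * d + (C ^ (m + 2) - C).rank := by
  have hL := (Lsub (m + 2) d 1 C).mulVecLin.finrank_range_add_finrank_ker
  have hC := (C ^ (m + 2) - C).mulVecLin.finrank_range_add_finrank_ker
  rw [ker_mulVecLin_Lsub_one,
    ← (Submodule.equivMapOfInjective _ (higmanLift_injective _ C) _).finrank_eq] at hL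
  simp only [Module.finrank_fintype_fun_eq_card, Fintype.card_prod, Fintype.card_fin] at hL hC
  rw [rank, rank]
  linarith

end

theorem stmt_12_general (K : Type*) [Field K] (s : ℕ) (hs : 2 ≤ s) (d : ℕ)
    (A B : Matrix (Fin d) (Fin d) K) (hA : IsUnit A) (C : Matrix (Fin d) (Fin d) K)
    (hC : C = A⁻¹ * B) :
    (Lsub s d A B).rank = (s - 1) * d + (C ^ s - C).rank := by
  obtain ⟨m, rfl⟩ := Nat.exists_eq_add_of_le' hs
  rw [rank_Lsub_eq_rank_Lsub_one hA, ← hC, rank_Lsub_one]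
  rfl

theorem stmt_12 (K : Type*) [Field K] (s : ℕ) (hs : 2 ≤ s) (d : ℕ) (hd : 1 ≤ d)
    (A B : Matrix (Fin d) (Fin d) K) (hA : IsUnit A) (C : Matrix (Fin d) (Fin d) K)
    (hC : C = A⁻¹ * B) :
    (Lsub s d A B).rank = (s - 1) * d + (C ^ s - C).rank :=
  stmt_12_general K s hs d A B hA C hC
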